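/- arXiv:2403.14321 — 3 statements merged into one kernel-verified Lean document; each statement's English description precedes it below -/
import Mathlib

section
/- Fix α ∈ (0,1], δ > 0, a ∈ C([0,1],ℝ), and x ∈ C^{α-Hld}([0,1],ℝ). Let τ_k^δ be the exit times of a (with τ_{k'_0}^δ = 1 for some smallest k'_0). Then the function G_δ(a,x)_t := Σ_{k≥1} a_{τ_{k-1}^δ} (x_{t∧τ_k^δ} - x_{t∧τ_{k-1}^δ}) is α-Hölder continuous, and for all 0 ≤ s < t ≤ 1, |G_δ(a,x)_t - G_δ(a,x)_s| ≤ ‖a‖_∞ ‖x‖_{α-Hld} k'_0 |t-s|^α. -/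
open Set

/-- The deterministic exit times of `a` at level `δ`, capped at `1`. -/
noncomputable def exitTimes (δ : ℝ) (a : ℝ → ℝ) : ℕ → ℝ
  | 0 => 0
  | k + 1 =>
      sInf ({t : ℝ | exitTimes δ a k < t ∧ δ < |a t - a (exitTimes δ a k)|} ∪ {1})

/-- `G_δ(a,x)_t = Σ_{k≥1} a_{τ_{k-1}} (x_{t ∧ τ_k} - x_{t ∧ τ_{k-1}})`. -/
noncomputable def Gmap (δ : ℝ) (a x : ℝ → ℝ) (t : ℝ) : ℝ :=
  ∑' k : ℕ,
    a (exitTimes δ a k) * (x (min t (exitTimes δ a (k + 1))) - x (min t (exitTimes δ a k)))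

lemma exitTimes_zero (δ : ℝ) (a : ℝ → ℝ) : exitTimes δ a 0 = 0 := rfl

lemma exitTimes_step (δ : ℝ) (a : ℝ → ℝ) (k : ℕ) (h : exitTimes δ a k ≤ 1) :
    exitTimes δ a k ≤ exitTimes δ a (k + 1) ∧ exitTimes δ a (k + 1) ≤ 1 := by
  have hlb : exitTimes δ a k ∈
      lowerBounds ({t : ℝ | exitTimes δ a k < t ∧ δ < |a t - a (exitTimes δ a k)|} ∪ {1}) := by
    rintro b (⟨hb, -⟩ | rfl)
    · exact hb.le
    · exact h
  constructor
  · exact le_csInf ⟨1, Or.inr rfl⟩ fun b hb => hlb hb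
  · exact csInf_le ⟨_, hlb⟩ (Or.inr rfl)

lemma exitTimes_le_one (δ : ℝ) (a : ℝ → ℝ) : ∀ k, exitTimes δ a k ≤ 1
  | 0 => zero_le_one
  | k + 1 => (exitTimes_step δ a k (exitTimes_le_one δ a k)).2

lemma exitTimes_mono_succ (δ : ℝ) (a : ℝ → ℝ) (k : ℕ) :
    exitTimes δ a k ≤ exitTimes δ a (k + 1) :=
  (exitTimes_step δ a k (exitTimes_le_one δ a k)).1

lemma exitTimes_nonneg (δ : ℝ) (a : ℝ → ℝ) : ∀ k, 0 ≤ exitTimes δ a k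
  | 0 => le_refl 0
  | k + 1 => (exitTimes_nonneg δ a k).trans (exitTimes_mono_succ δ a k)

lemma exitTimes_eq_one (δ : ℝ) (a : ℝ → ℝ) (k₀ : ℕ) (hk₀ : exitTimes δ a k₀ = 1) :
    ∀ k, k₀ ≤ k → exitTimes δ a k = 1 := by
  intro k hk
  induction k, hk using Nat.le_induction with
  | base => exact hk₀
  | succ n hn ih =>
    exact le_antisymm (exitTimes_le_one δ a (n + 1)) (ih ▸ exitTimes_mono_succ δ a n)

/-- If `a` is continuous with `‖a‖_∞ ≤ Ca`, `x` is `α`-Hölder with constant `Cx`, and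
`k₀` is the smallest index with `τ_{k₀}^δ = 1`, then `G_δ(a,x)` is `α`-Hölder:
`|G_δ(a,x)_t - G_δ(a,x)_s| ≤ Ca * Cx * k₀ * (t-s)^α` for all `0 ≤ s < t ≤ 1`. -/
theorem Gmap_holder (α δ : ℝ) (hα0 : 0 < α) (hα1 : α ≤ 1) (hδ : 0 < δ)
    (a x : ℝ → ℝ) (ha : ContinuousOn a (Icc 0 1))
    (Ca Cx : ℝ)
    (hCa : ∀ u ∈ Icc (0:ℝ) 1, |a u| ≤ Ca)
    (hx : ∀ s ∈ Icc (0:ℝ) 1, ∀ t ∈ Icc (0:ℝ) 1, |x t - x s| ≤ Cx * |t - s| ^ α)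
    (k₀ : ℕ) (hk₀ : exitTimes δ a k₀ = 1) (hk₀min : ∀ j < k₀, exitTimes δ a j ≠ 1) :
    ∀ s ∈ Icc (0:ℝ) 1, ∀ t ∈ Icc (0:ℝ) 1, s < t →
      |Gmap δ a x t - Gmap δ a x s| ≤ Ca * Cx * (k₀ : ℝ) * (t - s) ^ α := by
  intro s hs t ht hst
  set τ : ℕ → ℝ := exitTimes δ a with hτ
  have hCx : 0 ≤ Cx := by
    have h1 : (1:ℝ) ∈ Icc (0:ℝ) 1 := ⟨zero_le_one, le_refl 1⟩
    have h0 : (0:ℝ) ∈ Icc (0:ℝ) 1 := ⟨le_refl 0, zero_le_one⟩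
    have := hx 0 h0 1 h1
    simp [Real.one_rpow] at this
    exact le_trans (abs_nonneg _) this
  -- rewrite Gmap as a finite sum
  have hsum : ∀ u : ℝ, Gmap δ a x u =
      ∑ k ∈ Finset.range k₀, a (τ k) * (x (min u (τ (k + 1))) - x (min u (τ k))) := by
    intro u
    refine tsum_eq_sum ?_
    intro k hk
    have hk' : k₀ ≤ k := by simpa using hk
    have h1 : τ k = 1 := exitTimes_eq_one δ a k₀ hk₀ k hk'
    have h2 : τ (k + 1) = 1 := exitTimes_eq_one δ a k₀ hk₀ (k + 1) (hk'.trans (Nat.le_succ k))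
    simp only [← hτ]
    simp [h1, h2]
  -- key rearrangement
  have key : ∀ k : ℕ,
      a (τ k) * (x (min t (τ (k + 1))) - x (min t (τ k)))
        - a (τ k) * (x (min s (τ (k + 1))) - x (min s (τ k)))
      = a (τ k) * (x (min t (max s (τ (k + 1)))) - x (min t (max s (τ k)))) := by
    intro k
    have A : ∀ r : ℝ, x (min t r) - x (min s r) = x (min t (max s r)) - x s := by
      intro r
      rcases le_total r s with h | h
      · rw [min_eq_right (h.trans hst.le), min_eq_right h, max_eq_left h,
          min_eq_right hst.le]
        ring
      · rw [min_eq_left h, max_eq_right h]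
    have := A (τ (k + 1))
    have h2 := A (τ k)
    linear_combination (a (τ k)) * this - (a (τ k)) * h2
  have hbound : ∀ k : ℕ,
      |a (τ k) * (x (min t (max s (τ (k + 1)))) - x (min t (max s (τ k))))|
        ≤ Ca * Cx * (t - s) ^ α := by
    intro k
    set q := min t (max s (τ k)) with hq
    set p := min t (max s (τ (k + 1))) with hp
    have hsq : s ≤ q := le_min hst.le (le_max_left _ _)
    have hqt : q ≤ t := min_le_left _ _
    have hsp : s ≤ p := le_min hst.le (le_max_left _ _)
    have hpt : p ≤ t := min_le_left _ _
    have hq01 : q ∈ Icc (0:ℝ) 1 := ⟨hs.1.trans hsq, hqt.trans ht.2⟩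
    have hp01 : p ∈ Icc (0:ℝ) 1 := ⟨hs.1.trans hsp, hpt.trans ht.2⟩
    have hqp : q ≤ p := min_le_min (le_refl t) (max_le_max (le_refl s)
      (exitTimes_mono_succ δ a k))
    have hτ01 : τ k ∈ Icc (0:ℝ) 1 := ⟨exitTimes_nonneg δ a k, exitTimes_le_one δ a k⟩
    have hxb : |x p - x q| ≤ Cx * (t - s) ^ α := by
      refine le_trans (hx q hq01 p hp01) ?_
      have h1 : |p - q| = p - q := abs_of_nonneg (by linarith)
      rw [h1]
      exact mul_le_mul_of_nonneg_left
        (Real.rpow_le_rpow (by linarith) (by linarith) hα0.le) hCx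
    calc |a (τ k) * (x p - x q)| = |a (τ k)| * |x p - x q| := abs_mul _ _
      _ ≤ Ca * (Cx * (t - s) ^ α) := by
          apply mul_le_mul (hCa _ hτ01) hxb (abs_nonneg _)
          exact le_trans (abs_nonneg _) (hCa _ hτ01)
      _ = Ca * Cx * (t - s) ^ α := by ring
  rw [hsum t, hsum s, ← Finset.sum_sub_distrib]
  calc |∑ k ∈ Finset.range k₀, (a (τ k) * (x (min t (τ (k + 1))) - x (min t (τ k)))
          - a (τ k) * (x (min s (τ (k + 1))) - x (min s (τ k))))|
      ≤ ∑ k ∈ Finset.range k₀, |a (τ k) * (x (min t (τ (k + 1))) - x (min t (τ k)))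
          - a (τ k) * (x (min s (τ (k + 1))) - x (min s (τ k)))| :=
        Finset.abs_sum_le_sum_abs _ _
    _ ≤ ∑ k ∈ Finset.range k₀, Ca * Cx * (t - s) ^ α := by
        refine Finset.sum_le_sum fun k _ => ?_
        rw [key k]
        exact hbound k
    _ = Ca * Cx * (k₀ : ℝ) * (t - s) ^ α := by
        rw [Finset.sum_const, Finset.card_range, nsmul_eq_mul]
        ring
end

section
/- Let μ ∈ (−1, 0) and γ = α + μ with α, γ ∈ (0,1). Then for all t ∈ [0,1] and h ∈ (0, 1−t], one has t^γ (t+h)^μ ((t+h)^{−μ} − t^{−μ}) ≤ C h^γ for a constant C depending only on μ, γ. -/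
/-!
Put `s = t + h` and `ν = -μ ∈ (0, 1)`. Then `s^μ (s^ν - t^ν) = 1 - (t/s)^ν ≤ 1 - t/s = h/s`, because
`x ≤ x^ν` on `[0, 1]`. Finally `t^γ h / s ≤ s^(γ-1) h ≤ h^(γ-1) h = h^γ` since `0 ≤ γ ≤ 1` and `h ≤ s`,
so the constant `C = 1` works.
-/

open Set

namespace Real

theorem rpow_mul_sub_rpow_eq_one_sub_div_rpow {s t : ℝ} (hs : 0 < s) (ht : 0 ≤ t) (μ : ℝ) :
    s ^ μ * (s ^ (-μ) - t ^ (-μ)) = 1 - (t / s) ^ (-μ) := by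
  rw [mul_sub, ← rpow_add hs, add_neg_cancel, rpow_zero, div_rpow ht hs.le, rpow_neg hs.le μ,
    div_inv_eq_mul, mul_comm]

theorem rpow_mul_sub_rpow_le_sub_div {s t μ : ℝ} (hs : 0 < s) (ht : 0 ≤ t) (hts : t ≤ s)
    (hμ1 : -1 ≤ μ) (hμ2 : μ ≤ 0) : s ^ μ * (s ^ (-μ) - t ^ (-μ)) ≤ (s - t) / s := by
  have hx0 : 0 ≤ t / s := div_nonneg ht hs.le
  have hx1 : t / s ≤ 1 := (div_le_one hs).2 hts
  have hself_le : t / s ≤ (t / s) ^ (-μ) := by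
    simpa using rpow_le_rpow_of_exponent_ge' hx0 hx1 (neg_nonneg.2 hμ2) (neg_le.2 hμ1)
  rw [rpow_mul_sub_rpow_eq_one_sub_div_rpow hs ht, sub_div, div_self hs.ne']
  linarith

theorem rpow_mul_div_add_le_rpow {t h γ : ℝ} (ht : 0 ≤ t) (hh : 0 < h) (hγ0 : 0 ≤ γ)
    (hγ1 : γ ≤ 1) : t ^ γ * (h / (t + h)) ≤ h ^ γ := by
  have hs : 0 < t + h := by positivity
  calc t ^ γ * (h / (t + h)) ≤ (t + h) ^ γ * (h / (t + h)) := by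
        gcongr
        exact le_add_of_nonneg_right hh.le
    _ = (t + h) ^ (γ - 1) * h := by rw [rpow_sub_one hs.ne']; ring
    _ ≤ h ^ (γ - 1) * h := by
        gcongr ?_ * h
        exact rpow_le_rpow_of_nonpos hh (le_add_of_nonneg_left ht) (sub_nonpos.2 hγ1)
    _ = h ^ γ := by rw [rpow_sub_one hh.ne']; field_simp

end Real

theorem power_increment_bound_general (μ γ : ℝ) (hμ1 : -1 < μ) (hμ2 : μ < 0)
    (hγ : γ ∈ Ioo (0:ℝ) 1) :
    ∃ C > (0:ℝ), ∀ t ∈ Icc (0:ℝ) 1, ∀ h : ℝ, 0 < h → h ≤ 1 - t →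
      t ^ γ * (t + h) ^ μ * ((t + h) ^ (-μ) - t ^ (-μ)) ≤ C * h ^ γ := by
  refine ⟨1, one_pos, fun t ⟨ht0, _⟩ h hh _ => ?_⟩
  have hbracket : (t + h) ^ μ * ((t + h) ^ (-μ) - t ^ (-μ)) ≤ h / (t + h) := by
    simpa using Real.rpow_mul_sub_rpow_le_sub_div (s := t + h) (by linarith) ht0 (by linarith)
      hμ1.le hμ2.le
  calc t ^ γ * (t + h) ^ μ * ((t + h) ^ (-μ) - t ^ (-μ))
      = t ^ γ * ((t + h) ^ μ * ((t + h) ^ (-μ) - t ^ (-μ))) := mul_assoc _ _ _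
    _ ≤ t ^ γ * (h / (t + h)) := by gcongr
    _ ≤ 1 * h ^ γ := by
        rw [one_mul]
        exact Real.rpow_mul_div_add_le_rpow ht0 hh hγ.1.le hγ.2.le

/-- For `μ ∈ (-1,0)` and `γ = α + μ` with `α, γ ∈ (0,1)`: for all `t ∈ [0,1]` and
`h ∈ (0, 1-t]`, `t^γ (t+h)^μ ((t+h)^{-μ} - t^{-μ}) ≤ C h^γ` for a constant `C`
depending only on `μ, γ`. -/
theorem power_increment_bound (μ α γ : ℝ) (hμ1 : -1 < μ) (hμ2 : μ < 0)
    (hα : α ∈ Ioo (0:ℝ) 1) (hγ : γ ∈ Ioo (0:ℝ) 1) (hsum : γ = α + μ) :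
    ∃ C > (0:ℝ), ∀ t ∈ Icc (0:ℝ) 1, ∀ h : ℝ, 0 < h → h ≤ 1 - t →
      t ^ γ * (t + h) ^ μ * ((t + h) ^ (-μ) - t ^ (-μ)) ≤ C * h ^ γ :=
  power_increment_bound_general μ γ hμ1 hμ2 hγ
end

section
/- Under Hypothesis: μ < 0, g ∈ C_b² with sup_{t∈[0,1]}|g(εt) − 1| → 0 as ε → 0, define κ_ε(t) := κ(εt) with κ(t) = g(t)t^μ and the scaled operator 𝒦^ε f(t) := ε^{−μ}[κ_ε(t)(f(t) − f(0)) + ∫_0^t (f(s) − f(t)) (d/dt)κ_ε(t−s) ds]. Then the family {𝒦^ε}_{ε∈(0,1]} is uniformly bounded (equicontinuous) from C^{α-Hld}([0,1]) to C^{γ-Hld}([0,1]), and for each f ∈ C^{α-Hld}, 𝒦^ε f converges in C^{γ-Hld} as ε → 0 to 𝒦_0 f, the operator associated with the pure Riemann–Liouville kernel t^μ. -/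
/-!
Both `𝒦^ε` and `𝒦^ε - 𝒦_0` have the form
`f ↦ h t * t^μ * (f t - f 0) + ∫₀ᵗ (f u - f t) k(t - u) du`
with a weight `h` bounded and Lipschitz with constant `M` on `[0, 1]`, and a kernel with
`|k x| ≤ M x^{μ-1}` and `|k x - k y| ≤ M (x - y) y^{μ-2}` for `0 < y ≤ x ≤ 1`.
Every such operator maps an `α`-Hölder `f` with constant `C_f` to a `γ`-Hölder function with
constant `C(γ, μ) M C_f`: for `s < t` the increment splits into boundary terms, the integral over
`[s, t]`, the kernel increment integrated over `[0, s]`, and `(f s - f t) ∫₀ˢ k(t - u) du`, each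
`O(M C_f (t - s)^γ)` because `α + μ = γ`.
If `|g|, |g'|, |g''| ≤ C_g`, then for `𝒦^ε` (weight `g(ε·)`) one may take `M = 3(ε C_g + C_g)`,
and for `𝒦^ε - 𝒦_0` (weight `g(ε·) - 1`) `M = 3(ε C_g + sup_{[0,1]} |g(ε·) - 1|)`, which tends
to `0` with `ε`.
-/

open Set MeasureTheory

/-- The scaled fractional operator
`𝒦^ε f(t) = ε^{-μ}[κ_ε(t)(f t - f 0) + ∫_0^t (f s - f t) (d/dt)κ_ε(t-s) ds]`,
where `κ_ε(t) = κ(εt)` and `dκ ε` is the derivative of `t ↦ κ(εt)`. -/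
noncomputable def Kop (μ : ℝ) (κ : ℝ → ℝ) (dκ : ℝ → ℝ → ℝ) (ε : ℝ)
    (f : ℝ → ℝ) (t : ℝ) : ℝ :=
  ε ^ (-μ) * (κ (ε * t) * (f t - f 0) + ∫ u in (0:ℝ)..t, (f u - f t) * dκ ε (t - u))

/-- The limiting Riemann–Liouville operator
`𝒦_0 f(t) = t^μ (f t - f 0) + μ ∫_0^t (f s - f t) (t-s)^{μ-1} ds`. -/
noncomputable def K0op (μ : ℝ) (f : ℝ → ℝ) (t : ℝ) : ℝ :=
  t ^ μ * (f t - f 0) + μ * ∫ u in (0:ℝ)..t, (f u - f t) * (t - u) ^ (μ - 1)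

open intervalIntegral

def HolderOnUnit (C α : ℝ) (f : ℝ → ℝ) : Prop :=
  ∀ s ∈ Icc (0:ℝ) 1, ∀ t ∈ Icc (0:ℝ) 1, |f t - f s| ≤ C * |t - s| ^ α

namespace HolderOnUnit

variable {C α : ℝ} {f : ℝ → ℝ}

lemma nonneg (hf : HolderOnUnit C α f) : 0 ≤ C := by
  have h := hf 0 (left_mem_Icc.2 zero_le_one) 1 (right_mem_Icc.2 zero_le_one)
  rw [sub_zero, abs_one, Real.one_rpow, mul_one] at h
  exact (abs_nonneg _).trans h

lemma mono (hf : HolderOnUnit C α f) {C' : ℝ} (hC : C ≤ C') : HolderOnUnit C' α f :=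
  fun s hs t ht => (hf s hs t ht).trans (by gcongr)

lemma congr (hf : HolderOnUnit C α f) {g : ℝ → ℝ} (hfg : EqOn f g (Icc 0 1)) :
    HolderOnUnit C α g := fun s hs t ht => by
  rw [← hfg hs, ← hfg ht]; exact hf s hs t ht

lemma abs_sub_le_of_le (hf : HolderOnUnit C α f) {s t : ℝ} (hs : 0 ≤ s) (hst : s ≤ t)
    (ht : t ≤ 1) : |f s - f t| ≤ C * (t - s) ^ α := by
  rw [abs_sub_comm, ← abs_of_nonneg (sub_nonneg.2 hst)]
  exact hf s ⟨hs, hst.trans ht⟩ t ⟨hs.trans hst, ht⟩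

lemma continuousOn (hf : HolderOnUnit C α f) (hα : 0 < α) : ContinuousOn f (Icc 0 1) := by
  intro x hx
  rw [ContinuousWithinAt, tendsto_iff_norm_sub_tendsto_zero]
  have hlim : Filter.Tendsto (fun y => C * |y - x| ^ α) (nhdsWithin x (Icc 0 1))
      (nhds (C * |x - x| ^ α)) :=
    ((continuous_abs.comp (continuous_sub_right x)).rpow_const
      (fun _ => Or.inr hα.le)).continuousWithinAt.const_mul C
  rw [sub_self, abs_zero, Real.zero_rpow hα.ne', mul_zero] at hlim
  exact squeeze_zero' (Filter.Eventually.of_forall fun _ => norm_nonneg _)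
    (eventually_nhdsWithin_of_forall fun y hy => hf x hx y hy) hlim

end HolderOnUnit

lemma integral_sub_rpow_of_neg_one_lt {p : ℝ} (hp : -1 < p) (a b : ℝ) :
    ∫ u in a..b, (b - u) ^ p = (b - a) ^ (p + 1) / (p + 1) := by
  rw [integral_comp_sub_left (fun v => v ^ p) b, sub_self, integral_rpow (Or.inl hp),
    Real.zero_rpow (by linarith), sub_zero]

lemma integral_sub_rpow_le_of_lt_neg_one {p a b c : ℝ} (hp : p < -1) (hab : a ≤ b)
    (hbc : b < c) : ∫ u in a..b, (c - u) ^ p ≤ (c - b) ^ (p + 1) / -(p + 1) := by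
  have hzero : (0:ℝ) ∉ uIcc (c - b) (c - a) := by
    rw [uIcc_of_le (by linarith)]; exact fun h => by linarith [h.1]
  rw [integral_comp_sub_left (fun v => v ^ p) c, integral_rpow (Or.inr ⟨hp.ne, hzero⟩),
    ← neg_div_neg_eq, neg_sub]
  have : 0 ≤ (c - a) ^ (p + 1) := Real.rpow_nonneg (by linarith) _
  gcongr
  · linarith
  · linarith

lemma intervalIntegrable_sub_rpow {p : ℝ} (hp : -1 < p) (a b c : ℝ) :
    IntervalIntegrable (fun u => (c - u) ^ p) volume a b := by
  simpa using (intervalIntegrable_rpow' (a := c - a) (b := c - b) hp).comp_sub_left c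

lemma intervalIntegrable_sub_rpow_of_lt (p : ℝ) {a b c : ℝ} (hab : a ≤ b) (hbc : b < c) :
    IntervalIntegrable (fun u => (c - u) ^ p) volume a b := by
  refine ContinuousOn.intervalIntegrable fun u hu => ?_
  rw [uIcc_of_le hab] at hu
  exact ((continuous_sub_left c).continuousAt.rpow_const
    (Or.inl (by linarith [hu.2]))).continuousWithinAt

lemma abs_integral_le_integral_of_forall_mem_Ioo {F G : ℝ → ℝ} {a b : ℝ} (hab : a ≤ b)
    (hG : IntervalIntegrable G volume a b) (hFG : ∀ u ∈ Ioo a b, |F u| ≤ G u) :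
    |∫ u in a..b, F u| ≤ ∫ u in a..b, G u := by
  rw [← Real.norm_eq_abs]
  refine norm_integral_le_of_norm_le hab ?_ hG
  filter_upwards [Measure.ae_ne volume b] with u hub hu
  exact hFG u ⟨hu.1, lt_of_le_of_ne hu.2 hub⟩

lemma abs_rpow_sub_rpow_le_of_nonpos {μ s t : ℝ} (hμ : μ ≤ 0) (hs : 0 < s) (hst : s ≤ t) :
    |t ^ μ - s ^ μ| ≤ -μ * s ^ (μ - 1) * (t - s) := by
  have hderiv : ∀ x ∈ Icc s t, HasDerivWithinAt (fun x : ℝ => x ^ μ) (μ * x ^ (μ - 1))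
      (Icc s t) x := fun x hx =>
    (Real.hasDerivAt_rpow_const (Or.inl (by linarith [hx.1]))).hasDerivWithinAt
  have hbound : ∀ x ∈ Icc s t, ‖μ * x ^ (μ - 1)‖ ≤ -μ * s ^ (μ - 1) := fun x hx => by
    rw [Real.norm_eq_abs, abs_mul, abs_of_nonpos hμ,
      abs_of_nonneg (Real.rpow_nonneg (by linarith [hx.1]) _)]
    exact mul_le_mul_of_nonneg_left
      (Real.rpow_le_rpow_of_nonpos hs hx.1 (by linarith)) (neg_nonneg.2 hμ)
  simpa [Real.norm_eq_abs, abs_of_nonneg (sub_nonneg.2 hst)] using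
    (convex_Icc s t).norm_image_sub_le_of_norm_hasDerivWithin_le hderiv hbound
      (left_mem_Icc.2 hst) (right_mem_Icc.2 hst)

noncomputable def fracOp (μ : ℝ) (h k f : ℝ → ℝ) (t : ℝ) : ℝ :=
  h t * t ^ μ * (f t - f 0) + ∫ u in (0:ℝ)..t, (f u - f t) * k (t - u)

structure IsBoundedLipschitz (M : ℝ) (h : ℝ → ℝ) : Prop where
  abs_le : ∀ t ∈ Icc (0:ℝ) 1, |h t| ≤ M
  abs_sub_le : ∀ s ∈ Icc (0:ℝ) 1, ∀ t ∈ Icc (0:ℝ) 1, |h t - h s| ≤ M * |t - s|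

structure IsSingularKernel (μ M : ℝ) (k : ℝ → ℝ) : Prop where
  abs_le : ∀ x ∈ Ioc (0:ℝ) 1, |k x| ≤ M * x ^ (μ - 1)
  abs_sub_le : ∀ ⦃x y : ℝ⦄, 0 < y → y ≤ x → x ≤ 1 → |k x - k y| ≤ M * (x - y) * y ^ (μ - 2)
  continuousOn : ContinuousOn k (Ioc 0 1)

lemma nonneg_of_forall_abs_le_mul_rpow {M p : ℝ} {k : ℝ → ℝ}
    (hk : ∀ x ∈ Ioc (0:ℝ) 1, |k x| ≤ M * x ^ p) : 0 ≤ M := by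
  have h1 := hk 1 ⟨one_pos, le_rfl⟩
  rw [Real.one_rpow, mul_one] at h1
  exact (abs_nonneg _).trans h1

lemma IsSingularKernel.nonneg {μ M : ℝ} {k : ℝ → ℝ} (hk : IsSingularKernel μ M k) : 0 ≤ M :=
  nonneg_of_forall_abs_le_mul_rpow hk.abs_le

lemma IsBoundedLipschitz.mono {M M' : ℝ} {h : ℝ → ℝ} (hh : IsBoundedLipschitz M h)
    (hM : M ≤ M') : IsBoundedLipschitz M' h where
  abs_le t ht := (hh.abs_le t ht).trans hM
  abs_sub_le s hs t ht := (hh.abs_sub_le s hs t ht).trans (by gcongr)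

section FracOp

variable {α γ μ M Cf : ℝ} {h k f : ℝ → ℝ}

lemma abs_holder_mul_kernel_le (hf : HolderOnUnit Cf α f)
    (hk : ∀ x ∈ Ioc (0:ℝ) 1, |k x| ≤ M * x ^ (μ - 1)) (hμ : μ ≤ 1) (hμα : μ = γ - α)
    {u s t : ℝ} (hu : 0 ≤ u) (hus : u < s) (hst : s ≤ t) (ht : t ≤ 1) :
    |(f u - f s) * k (t - u)| ≤ M * Cf * (s - u) ^ (γ - 1) := by
  have hsu : 0 < s - u := by linarith
  have hkbound : |k (t - u)| ≤ M * (s - u) ^ (μ - 1) :=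
    (hk _ ⟨by linarith, by linarith⟩).trans (mul_le_mul_of_nonneg_left
      (Real.rpow_le_rpow_of_nonpos hsu (by linarith) (by linarith))
      (nonneg_of_forall_abs_le_mul_rpow hk))
  calc |(f u - f s) * k (t - u)|
      ≤ Cf * (s - u) ^ α * (M * (s - u) ^ (μ - 1)) := by
        rw [abs_mul]
        exact mul_le_mul (hf.abs_sub_le_of_le hu hus.le (hst.trans ht)) hkbound
          (abs_nonneg _) (by have := hf.nonneg; positivity)
    _ = M * Cf * (s - u) ^ (γ - 1) := by
        rw [mul_mul_mul_comm, ← Real.rpow_add hsu, hμα]; ring_nf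

lemma intervalIntegrable_holder_mul_kernel (hf : HolderOnUnit Cf α f)
    (hk : ∀ x ∈ Ioc (0:ℝ) 1, |k x| ≤ M * x ^ (μ - 1)) (hkc : ContinuousOn k (Ioc 0 1))
    (hα : 0 < α) (hγ : 0 < γ) (hμ : μ ≤ 1) (hμα : μ = γ - α)
    {s t : ℝ} (hs : 0 ≤ s) (hst : s ≤ t) (ht : t ≤ 1) :
    IntervalIntegrable (fun u => (f u - f s) * k (t - u)) volume 0 s := by
  have hmaj : IntervalIntegrable (fun u => M * Cf * (s - u) ^ (γ - 1)) volume 0 s :=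
    (intervalIntegrable_sub_rpow (by linarith) _ _ _).const_mul _
  rw [intervalIntegrable_iff_integrableOn_Ioo_of_le hs] at hmaj ⊢
  have hcont : ContinuousOn (fun u => (f u - f s) * k (t - u)) (Ioo 0 s) :=
    ((hf.continuousOn hα).mono fun u hu => ⟨hu.1.le, by linarith [hu.2]⟩).sub
      continuousOn_const |>.mul <| hkc.comp (continuous_sub_left t).continuousOn
      fun u hu => ⟨by linarith [hu.2], by linarith [hu.1]⟩
  refine hmaj.mono' (hcont.aestronglyMeasurable measurableSet_Ioo) ?_
  filter_upwards [ae_restrict_mem measurableSet_Ioo] with u hu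
  exact abs_holder_mul_kernel_le hf hk hμ hμα hu.1.le hu.2 hst ht

lemma integral_increment_eq {s t : ℝ} (hs : 0 ≤ s) (hst : s ≤ t)
    (hIt : IntervalIntegrable (fun u => (f u - f t) * k (t - u)) volume 0 t)
    (hIs : IntervalIntegrable (fun u => (f u - f s) * k (s - u)) volume 0 s)
    (hIst : IntervalIntegrable (fun u => (f u - f s) * k (t - u)) volume 0 s)
    (hk : IntervalIntegrable (fun u => k (t - u)) volume 0 s) :
    (∫ u in (0:ℝ)..t, (f u - f t) * k (t - u)) - ∫ u in (0:ℝ)..s, (f u - f s) * k (s - u) =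
      (∫ u in s..t, (f u - f t) * k (t - u))
        + (∫ u in (0:ℝ)..s, (f u - f s) * (k (t - u) - k (s - u)))
        + (f s - f t) * ∫ u in (0:ℝ)..s, k (t - u) := by
  have hsmem : s ∈ uIcc 0 t := mem_uIcc_of_le hs hst
  rw [← integral_add_adjacent_intervals
    (hIt.mono_set (uIcc_subset_uIcc left_mem_uIcc hsmem))
    (hIt.mono_set (uIcc_subset_uIcc hsmem right_mem_uIcc))]
  have hsplit : ∫ u in (0:ℝ)..s, (f u - f t) * k (t - u) =
      (∫ u in (0:ℝ)..s, (f u - f s) * k (t - u)) + (f s - f t) * ∫ u in (0:ℝ)..s, k (t - u) := by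
    rw [← intervalIntegral.integral_const_mul, ← integral_add hIst (hk.const_mul _)]
    congr 1; ext u; ring
  have hdiff : ∫ u in (0:ℝ)..s, (f u - f s) * (k (t - u) - k (s - u)) =
      (∫ u in (0:ℝ)..s, (f u - f s) * k (t - u)) - ∫ u in (0:ℝ)..s, (f u - f s) * k (s - u) := by
    rw [← integral_sub hIst hIs]
    congr 1; ext u; ring
  rw [hsplit, hdiff]; ring

lemma abs_integral_tail_le (hf : HolderOnUnit Cf α f)
    (hk : ∀ x ∈ Ioc (0:ℝ) 1, |k x| ≤ M * x ^ (μ - 1)) (hγ : 0 < γ) (hμ : μ ≤ 1)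
    (hμα : μ = γ - α) {s t : ℝ} (hs : 0 ≤ s) (hst : s ≤ t) (ht : t ≤ 1) :
    |∫ u in s..t, (f u - f t) * k (t - u)| ≤ M * Cf * (t - s) ^ γ / γ := by
  calc |∫ u in s..t, (f u - f t) * k (t - u)|
      ≤ ∫ u in s..t, M * Cf * (t - u) ^ (γ - 1) :=
        abs_integral_le_integral_of_forall_mem_Ioo hst
          ((intervalIntegrable_sub_rpow (by linarith) _ _ _).const_mul _) fun u hu =>
          abs_holder_mul_kernel_le hf hk hμ hμα (by linarith [hu.1]) hu.2 le_rfl ht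
    _ = M * Cf * (t - s) ^ γ / γ := by
        rw [intervalIntegral.integral_const_mul,
          integral_sub_rpow_of_neg_one_lt (by linarith), sub_add_cancel, mul_div_assoc]

lemma abs_integral_near_le (hf : HolderOnUnit Cf α f) (hk : IsSingularKernel μ M k)
    (hγ : 0 < γ) (hμ : μ ≤ 1) (hμα : μ = γ - α) {m s t : ℝ} (hm : 0 ≤ m) (hms : m ≤ s)
    (hsm : s - m ≤ t - s) (ht : t ≤ 1) :
    |∫ u in m..s, (f u - f s) * (k (t - u) - k (s - u))| ≤ 2 * (M * Cf * (t - s) ^ γ) / γ := by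
  have hst : s ≤ t := by linarith
  have hpt : ∀ u ∈ Ioo m s,
      |(f u - f s) * (k (t - u) - k (s - u))| ≤ 2 * (M * Cf) * (s - u) ^ (γ - 1) := by
    intro u hu
    have hu0 : 0 ≤ u := by linarith [hu.1]
    rw [mul_sub]
    refine (abs_sub _ _).trans ?_
    linarith [abs_holder_mul_kernel_le hf hk.abs_le hμ hμα hu0 hu.2 hst ht,
      abs_holder_mul_kernel_le hf hk.abs_le hμ hμα hu0 hu.2 le_rfl (hst.trans ht)]
  have hMCf : 0 ≤ M * Cf := mul_nonneg hk.nonneg hf.nonneg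
  calc |∫ u in m..s, (f u - f s) * (k (t - u) - k (s - u))|
      ≤ ∫ u in m..s, 2 * (M * Cf) * (s - u) ^ (γ - 1) :=
        abs_integral_le_integral_of_forall_mem_Ioo hms
          ((intervalIntegrable_sub_rpow (by linarith) _ _ _).const_mul _) hpt
    _ = 2 * (M * Cf) * (s - m) ^ γ / γ := by
        rw [intervalIntegral.integral_const_mul,
          integral_sub_rpow_of_neg_one_lt (by linarith), sub_add_cancel, mul_div_assoc]
    _ ≤ 2 * (M * Cf * (t - s) ^ γ) / γ := by
        rw [mul_assoc]
        gcongr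

lemma abs_integral_far_le (hf : HolderOnUnit Cf α f) (hk : IsSingularKernel μ M k)
    (hγ : γ < 1) (hμα : μ = γ - α) {s t : ℝ} (h2s : t ≤ 2 * s) (hst : s < t) (ht : t ≤ 1) :
    |∫ u in (0:ℝ)..(2 * s - t), (f u - f s) * (k (t - u) - k (s - u))| ≤
      M * Cf * (t - s) ^ γ / (1 - γ) := by
  have hts : 0 < t - s := by linarith
  have hpt : ∀ u ∈ Ioo 0 (2 * s - t), |(f u - f s) * (k (t - u) - k (s - u))| ≤
      M * Cf * (t - s) * (s - u) ^ (γ - 2) := by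
    intro u hu
    have hsu : 0 < s - u := by linarith [hu.2]
    have hkk := hk.abs_sub_le (x := t - u) hsu (by linarith) (by linarith [hu.1])
    rw [sub_sub_sub_cancel_right] at hkk
    calc |(f u - f s) * (k (t - u) - k (s - u))|
        ≤ Cf * (s - u) ^ α * (M * (t - s) * (s - u) ^ (μ - 2)) := by
          rw [abs_mul]
          exact mul_le_mul (hf.abs_sub_le_of_le hu.1.le (by linarith) (by linarith)) hkk
            (abs_nonneg _) (by have := hf.nonneg; positivity)
      _ = M * Cf * (t - s) * (s - u) ^ (γ - 2) := by
          rw [mul_mul_mul_comm, mul_comm, ← mul_assoc, ← Real.rpow_add hsu, hμα]; ring_nf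
  have hMCf : 0 ≤ M * Cf * (t - s) := by
    have := hk.nonneg; have := hf.nonneg; positivity
  calc |∫ u in (0:ℝ)..(2 * s - t), (f u - f s) * (k (t - u) - k (s - u))|
      ≤ ∫ u in (0:ℝ)..(2 * s - t), M * Cf * (t - s) * (s - u) ^ (γ - 2) :=
        abs_integral_le_integral_of_forall_mem_Ioo (by linarith)
          ((intervalIntegrable_sub_rpow_of_lt _ (by linarith) (by linarith)).const_mul _) hpt
    _ ≤ M * Cf * (t - s) * ((t - s) ^ (γ - 1) / (1 - γ)) := by
        rw [intervalIntegral.integral_const_mul]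
        refine mul_le_mul_of_nonneg_left ?_ hMCf
        have hI := integral_sub_rpow_le_of_lt_neg_one (p := γ - 2) (a := 0) (b := 2 * s - t)
          (c := s) (by linarith) (by linarith) (by linarith)
        rwa [show s - (2 * s - t) = t - s by ring, show γ - 2 + 1 = γ - 1 by ring,
          show -(γ - 1) = 1 - γ by ring] at hI
    _ = M * Cf * (t - s) ^ γ / (1 - γ) := by
        rw [Real.rpow_sub_one hts.ne']; field_simp

lemma abs_mul_integral_kernel_le (hf : HolderOnUnit Cf α f)
    (hk : ∀ x ∈ Ioc (0:ℝ) 1, |k x| ≤ M * x ^ (μ - 1)) (hμ : μ < 0) (hμα : μ = γ - α)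
    {s t : ℝ} (hs : 0 ≤ s) (hst : s < t) (ht : t ≤ 1) :
    |(f s - f t) * ∫ u in (0:ℝ)..s, k (t - u)| ≤ M * Cf * (t - s) ^ γ / -μ := by
  have hts : 0 < t - s := by linarith
  have hint : |∫ u in (0:ℝ)..s, k (t - u)| ≤ M * ((t - s) ^ μ / -μ) :=
    calc |∫ u in (0:ℝ)..s, k (t - u)|
        ≤ ∫ u in (0:ℝ)..s, M * (t - u) ^ (μ - 1) :=
          abs_integral_le_integral_of_forall_mem_Ioo hs
            ((intervalIntegrable_sub_rpow_of_lt _ hs hst).const_mul _) fun u hu =>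
            hk _ ⟨by linarith [hu.2], by linarith [hu.1]⟩
      _ ≤ M * ((t - s) ^ μ / -μ) := by
          rw [intervalIntegral.integral_const_mul]
          refine mul_le_mul_of_nonneg_left ?_ (nonneg_of_forall_abs_le_mul_rpow hk)
          simpa only [sub_add_cancel] using
            integral_sub_rpow_le_of_lt_neg_one (p := μ - 1) (by linarith) hs hst
  calc |(f s - f t) * ∫ u in (0:ℝ)..s, k (t - u)|
      ≤ Cf * (t - s) ^ α * (M * ((t - s) ^ μ / -μ)) := by
        rw [abs_mul]
        exact mul_le_mul (hf.abs_sub_le_of_le hs hst.le ht) hint (abs_nonneg _)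
          (by have := hf.nonneg; positivity)
    _ = M * Cf * (t - s) ^ γ / -μ := by
        rw [hμα] at hint ⊢
        rw [show γ = α + (γ - α) by ring, Real.rpow_add hts]
        ring_nf

lemma abs_integral_kernel_increment_le (hf : HolderOnUnit Cf α f) (hk : IsSingularKernel μ M k)
    (hγ : γ ∈ Ioo (0:ℝ) 1) (hμ : μ ∈ Ico (-1:ℝ) 0) (hμα : μ = γ - α) {s t : ℝ} (hs : 0 ≤ s)
    (hst : s < t) (ht : t ≤ 1) :
    |∫ u in (0:ℝ)..s, (f u - f s) * (k (t - u) - k (s - u))| ≤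
      (2 / γ + 1 / (1 - γ)) * (M * Cf * (t - s) ^ γ) := by
  have hP : 0 ≤ M * Cf * (t - s) ^ γ := by
    have := hk.nonneg; have := hf.nonneg; have : 0 ≤ (t - s) ^ γ := by positivity
    positivity
  have hγ1 : 0 < 1 - γ := sub_pos.2 hγ.2
  -- Near `s` the two kernel values are bounded separately; on `[0, 2s - t]`, where
  -- `s - u ≥ t - s`, the Lipschitz bound on `k` is used instead.
  rcases le_or_gt t (2 * s) with h2s | h2s
  · have hα : 0 < α := by linarith [hγ.1, hμ.2]
    have hint := (intervalIntegrable_holder_mul_kernel hf hk.abs_le hk.continuousOn hα hγ.1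
      (by linarith [hμ.2]) hμα hs hst.le ht).sub
      (intervalIntegrable_holder_mul_kernel hf hk.abs_le hk.continuousOn hα hγ.1
        (by linarith [hμ.2]) hμα hs le_rfl (hst.le.trans ht))
    simp only [← mul_sub] at hint
    have hm : 2 * s - t ∈ uIcc 0 s := mem_uIcc_of_le (by linarith) (by linarith)
    rw [← integral_add_adjacent_intervals (hint.mono_set (uIcc_subset_uIcc left_mem_uIcc hm))
      (hint.mono_set (uIcc_subset_uIcc hm right_mem_uIcc))]
    refine (abs_add_le _ _).trans ?_
    have hfar := abs_integral_far_le hf hk hγ.2 hμα h2s hst ht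
    have hnear := abs_integral_near_le (m := 2 * s - t) (s := s) hf hk hγ.1 (by linarith [hμ.2]) hμα
      (by linarith) (by linarith) (by linarith) ht
    rw [add_mul, div_mul_eq_mul_div, div_mul_eq_mul_div, one_mul]
    linarith
  · have hnear := abs_integral_near_le hf hk hγ.1 (by linarith [hμ.2]) hμα le_rfl hs
      (by linarith) ht
    have : 0 ≤ 1 / (1 - γ) * (M * Cf * (t - s) ^ γ) := by positivity
    rw [add_mul, div_mul_eq_mul_div]
    linarith

lemma abs_rpow_sub_rpow_mul_rpow_le {α γ μ : ℝ} (hγ : γ ∈ Ioo (0:ℝ) 1)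
    (hμ : μ ∈ Ico (-1:ℝ) 0) (hμα : μ = γ - α) {s t : ℝ} (hs : 0 ≤ s) (hst : s < t) :
    |t ^ μ - s ^ μ| * s ^ α ≤ (t - s) ^ γ := by
  have hts : 0 < t - s := by linarith
  rcases hs.eq_or_lt with rfl | hs
  · rw [Real.zero_rpow (show α ≠ 0 by linarith [hγ.1, hμ.2]), mul_zero]; positivity
  rw [abs_sub_comm, abs_of_nonneg (sub_nonneg.2 (Real.rpow_le_rpow_of_nonpos hs hst.le hμ.2.le))]
  rcases le_or_gt s (t - s) with hs2 | hs2
  · calc (s ^ μ - t ^ μ) * s ^ α ≤ s ^ μ * s ^ α := by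
          have : 0 ≤ t ^ μ := Real.rpow_nonneg (by linarith) μ
          gcongr; linarith
      _ = s ^ γ := by rw [← Real.rpow_add hs, hμα]; ring_nf
      _ ≤ (t - s) ^ γ := Real.rpow_le_rpow hs.le hs2 hγ.1.le
  · have hmvt : s ^ μ - t ^ μ ≤ (t - s) * s ^ (μ - 1) := by
      have h1 := abs_rpow_sub_rpow_le_of_nonpos hμ.2.le hs hst.le
      have h2 : -μ * s ^ (μ - 1) ≤ 1 * s ^ (μ - 1) := by gcongr; linarith [hμ.1]
      rw [abs_sub_comm] at h1
      nlinarith [le_abs_self (s ^ μ - t ^ μ)]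
    calc (s ^ μ - t ^ μ) * s ^ α ≤ (t - s) * s ^ (μ - 1) * s ^ α := by gcongr
      _ = (t - s) * s ^ (γ - 1) := by rw [mul_assoc, ← Real.rpow_add hs, hμα]; ring_nf
      _ ≤ (t - s) * (t - s) ^ (γ - 1) := mul_le_mul_of_nonneg_left
          (Real.rpow_le_rpow_of_nonpos hts hs2.le (by linarith [hγ.2])) hts.le
      _ = (t - s) ^ γ := by rw [Real.rpow_sub_one hts.ne']; field_simp

lemma abs_boundary_sub_le (hh : IsBoundedLipschitz M h) (hf : HolderOnUnit Cf α f)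
    (hγ : γ ∈ Ioo (0:ℝ) 1) (hμ : μ ∈ Ico (-1:ℝ) 0) (hμα : μ = γ - α) {s t : ℝ} (hs : 0 ≤ s)
    (hst : s < t) (ht : t ≤ 1) :
    |h t * t ^ μ * (f t - f 0) - h s * s ^ μ * (f s - f 0)| ≤ 3 * (M * Cf * (t - s) ^ γ) := by
  have hts : 0 < t - s := by linarith
  have hCf := hf.nonneg
  have hht := hh.abs_le t ⟨by linarith, ht⟩
  have hM : 0 ≤ M := (abs_nonneg _).trans hht
  have hfs0 : |f s - f 0| ≤ Cf * s ^ α := by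
    rw [abs_sub_comm]; simpa using hf.abs_sub_le_of_le le_rfl hs (hst.le.trans ht)
  have hhts : |h t - h s| ≤ M * (t - s) := by
    simpa [abs_of_pos hts] using hh.abs_sub_le s ⟨hs, by linarith⟩ t ⟨by linarith, ht⟩
  have hfirst : |h t * t ^ μ * (f t - f s)| ≤ M * Cf * (t - s) ^ γ :=
    calc _ ≤ M * (t - s) ^ μ * (Cf * (t - s) ^ α) := by
          rw [abs_mul, abs_mul, abs_sub_comm (f t),
            abs_of_nonneg (Real.rpow_nonneg (by linarith) μ)]
          exact mul_le_mul (mul_le_mul hht (Real.rpow_le_rpow_of_nonpos hts (by linarith) hμ.2.le)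
            (Real.rpow_nonneg (by linarith) μ) hM) (hf.abs_sub_le_of_le hs hst.le ht)
            (abs_nonneg _) (by positivity)
      _ = M * Cf * (t - s) ^ γ := by
          rw [mul_mul_mul_comm, mul_assoc, ← Real.rpow_add hts, hμα]; ring_nf
  have hsecond : |(h t - h s) * s ^ μ * (f s - f 0)| ≤ M * Cf * (t - s) ^ γ :=
    calc _ ≤ M * (t - s) * s ^ μ * (Cf * s ^ α) := by
          rw [abs_mul, abs_mul, abs_of_nonneg (Real.rpow_nonneg hs μ)]; gcongr
      _ = M * Cf * ((t - s) * s ^ γ) := by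
          rw [hμα, show γ = (γ - α) + α by ring, Real.rpow_add' hs (by linarith [hγ.1])]; ring_nf
      _ ≤ M * Cf * ((t - s) ^ γ * 1) := by
          gcongr
          exacts [Real.self_le_rpow_of_le_one hts.le (by linarith) hγ.2.le,
            Real.rpow_le_one hs (by linarith) hγ.1.le]
      _ = M * Cf * (t - s) ^ γ := by rw [mul_one]
  have hthird : |h t * (t ^ μ - s ^ μ) * (f s - f 0)| ≤ M * Cf * (t - s) ^ γ :=
    calc _ ≤ M * |t ^ μ - s ^ μ| * (Cf * s ^ α) := by rw [abs_mul, abs_mul]; gcongr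
      _ = M * Cf * (|t ^ μ - s ^ μ| * s ^ α) := by ring
      _ ≤ M * Cf * (t - s) ^ γ := by gcongr; exact abs_rpow_sub_rpow_mul_rpow_le hγ hμ hμα hs hst
  rw [show h t * t ^ μ * (f t - f 0) - h s * s ^ μ * (f s - f 0) = h t * t ^ μ * (f t - f s)
    + (h t - h s) * s ^ μ * (f s - f 0) + h t * (t ^ μ - s ^ μ) * (f s - f 0) by ring]
  linarith [abs_add_three (h t * t ^ μ * (f t - f s)) ((h t - h s) * s ^ μ * (f s - f 0))
    (h t * (t ^ μ - s ^ μ) * (f s - f 0))]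

noncomputable def fracHolderConst (γ μ : ℝ) : ℝ := 3 + 3 / γ + 1 / (1 - γ) + 1 / -μ

lemma fracHolderConst_pos (hγ : γ ∈ Ioo (0:ℝ) 1) (hμ : μ < 0) : 0 < fracHolderConst γ μ := by
  have := hγ.1; have : 0 < 1 - γ := sub_pos.2 hγ.2; have : 0 < -μ := neg_pos.2 hμ
  unfold fracHolderConst; positivity

lemma abs_fracOp_sub_le_of_lt (hh : IsBoundedLipschitz M h) (hk : IsSingularKernel μ M k)
    (hf : HolderOnUnit Cf α f) (hγ : γ ∈ Ioo (0:ℝ) 1) (hμ : μ ∈ Ico (-1:ℝ) 0)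
    (hμα : μ = γ - α) {s t : ℝ} (hs : 0 ≤ s) (hst : s < t) (ht : t ≤ 1) :
    |fracOp μ h k f t - fracOp μ h k f s| ≤ fracHolderConst γ μ * M * Cf * (t - s) ^ γ := by
  have hint : ∀ {s t : ℝ}, 0 ≤ s → s ≤ t → t ≤ 1 →
      IntervalIntegrable (fun u => (f u - f s) * k (t - u)) volume 0 s := fun hs hst ht =>
    intervalIntegrable_holder_mul_kernel hf hk.abs_le hk.continuousOn (by linarith [hγ.1, hμ.2])
      hγ.1 (by linarith [hμ.2]) hμα hs hst ht
  have hk_int : IntervalIntegrable (fun u => k (t - u)) volume 0 s := by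
    refine ContinuousOn.intervalIntegrable (hk.continuousOn.comp
      (continuous_sub_left t).continuousOn fun u hu => ?_)
    rw [uIcc_of_le hs] at hu
    exact ⟨by linarith [hu.2], by linarith [hu.1]⟩
  have hsplit := integral_increment_eq hs hst.le (hint (by linarith) le_rfl ht)
    (hint hs le_rfl (hst.le.trans ht)) (hint hs hst.le ht) hk_int
  set B := h t * t ^ μ * (f t - f 0) - h s * s ^ μ * (f s - f 0)
  set I₁ := ∫ u in s..t, (f u - f t) * k (t - u)
  set I₂ := ∫ u in (0:ℝ)..s, (f u - f s) * (k (t - u) - k (s - u))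
  set I₃ := (f s - f t) * ∫ u in (0:ℝ)..s, k (t - u)
  have hdecomp : fracOp μ h k f t - fracOp μ h k f s = B + I₁ + I₂ + I₃ := by
    unfold fracOp; linear_combination hsplit
  have hB := abs_boundary_sub_le hh hf hγ hμ hμα hs hst ht
  have hI₁ := abs_integral_tail_le hf hk.abs_le hγ.1 (by linarith [hμ.2]) hμα hs hst.le ht
  have hI₂ := abs_integral_kernel_increment_le hf hk hγ hμ hμα hs hst ht
  have hI₃ := abs_mul_integral_kernel_le hf hk.abs_le hμ.2 hμα hs hst ht
  have hsum : fracHolderConst γ μ * M * Cf * (t - s) ^ γ =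
      3 * (M * Cf * (t - s) ^ γ) + M * Cf * (t - s) ^ γ / γ
        + (2 / γ + 1 / (1 - γ)) * (M * Cf * (t - s) ^ γ) + M * Cf * (t - s) ^ γ / -μ := by
    unfold fracHolderConst; ring
  rw [hdecomp, hsum]
  linarith [abs_add_three B I₁ I₂, abs_add_le (B + I₁ + I₂) I₃]

theorem holderOnUnit_fracOp (hh : IsBoundedLipschitz M h) (hk : IsSingularKernel μ M k)
    (hf : HolderOnUnit Cf α f) (hγ : γ ∈ Ioo (0:ℝ) 1) (hμ : μ ∈ Ico (-1:ℝ) 0)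
    (hμα : μ = γ - α) :
    HolderOnUnit (fracHolderConst γ μ * M * Cf) γ (fracOp μ h k f) := by
  intro s hs t ht
  rcases lt_trichotomy s t with hst | rfl | hst
  · rw [abs_of_pos (sub_pos.2 hst)]
    exact abs_fracOp_sub_le_of_lt hh hk hf hγ hμ hμα hs.1 hst ht.2
  · simp [Real.zero_rpow hγ.1.ne']
  · rw [abs_sub_comm, abs_sub_comm t, abs_of_pos (sub_pos.2 hst)]
    exact abs_fracOp_sub_le_of_lt hh hk hf hγ hμ hμα ht.1 hst hs.2

end FracOp

/-- With `κ x = g x * x^μ`, `scaledKernel μ g g' 0 ε x = ε^{-μ} (d/dx) κ(ε x)`, and subtracting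
the kernel `μ x^{μ-1}` of `𝒦_0` from it gives `scaledKernel μ g g' 1 ε x`. -/
noncomputable def scaledKernel (μ : ℝ) (g g' : ℝ → ℝ) (c ε x : ℝ) : ℝ :=
  ε * g' (ε * x) * x ^ μ + μ * (g (ε * x) - c) * x ^ (μ - 1)

section ScaledKernel

variable {μ Cg ε c A : ℝ} {g g' g'' : ℝ → ℝ}

lemma isBoundedLipschitz_comp_mul_sub (hg' : ∀ t, HasDerivAt g (g' t) t)
    (hgb' : ∀ t, |g' t| ≤ Cg) (hε : 0 ≤ ε) (hA : ∀ x ∈ Icc (0:ℝ) 1, |g (ε * x) - c| ≤ A) :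
    IsBoundedLipschitz (ε * Cg + A) (fun t => g (ε * t) - c) := by
  have hCg : 0 ≤ Cg := (abs_nonneg _).trans (hgb' 0)
  have hA0 : 0 ≤ A := (abs_nonneg _).trans (hA 0 (left_mem_Icc.2 zero_le_one))
  refine ⟨fun t ht => (hA t ht).trans (by nlinarith), fun s _ t _ => ?_⟩
  have hderiv : ∀ x ∈ univ, HasDerivWithinAt (fun u => g (ε * u)) (g' (ε * x) * ε) univ x :=
    fun x _ => ((hg' (ε * x)).comp x ((hasDerivAt_id x).const_mul ε |>.congr_deriv
      (mul_one ε))).hasDerivWithinAt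
  have hbound : ∀ x ∈ univ, ‖g' (ε * x) * ε‖ ≤ ε * Cg := fun x _ => by
    rw [Real.norm_eq_abs, abs_mul, abs_of_nonneg hε, mul_comm]
    exact mul_le_mul_of_nonneg_left (hgb' _) hε
  have hmvt := convex_univ.norm_image_sub_le_of_norm_hasDerivWithin_le hderiv hbound
    (mem_univ s) (mem_univ t)
  rw [Real.norm_eq_abs, Real.norm_eq_abs] at hmvt
  rw [sub_sub_sub_cancel_right]
  exact hmvt.trans (by gcongr; linarith)

lemma abs_scaledKernel_le (hgb' : ∀ t, |g' t| ≤ Cg) (hμ : |μ| ≤ 1) (hε : 0 ≤ ε)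
    (hA : ∀ x ∈ Icc (0:ℝ) 1, |g (ε * x) - c| ≤ A) {x : ℝ} (hx : x ∈ Ioc (0:ℝ) 1) :
    |scaledKernel μ g g' c ε x| ≤ (ε * Cg + A) * x ^ (μ - 1) := by
  have hx0 := hx.1
  have hxμ : x ^ μ ≤ x ^ (μ - 1) := Real.rpow_le_rpow_of_exponent_ge hx0 hx.2 (by linarith)
  have hA' := hA x ⟨hx0.le, hx.2⟩
  have hCg : 0 ≤ Cg := (abs_nonneg _).trans (hgb' 0)
  have h1 : |ε * g' (ε * x) * x ^ μ| ≤ ε * Cg * x ^ (μ - 1) := by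
    rw [abs_mul, abs_mul, abs_of_nonneg hε, abs_of_nonneg (Real.rpow_nonneg hx0.le μ)]
    exact mul_le_mul (mul_le_mul_of_nonneg_left (hgb' _) hε) hxμ
      (Real.rpow_nonneg hx0.le μ) (by positivity)
  have h2 : |μ * (g (ε * x) - c) * x ^ (μ - 1)| ≤ A * x ^ (μ - 1) := by
    rw [abs_mul, abs_mul, abs_of_nonneg (by positivity : 0 ≤ x ^ (μ - 1))]
    gcongr
    nlinarith [abs_nonneg μ, abs_nonneg (g (ε * x) - c)]
  unfold scaledKernel
  linarith [abs_add_le (ε * g' (ε * x) * x ^ μ) (μ * (g (ε * x) - c) * x ^ (μ - 1))]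

lemma hasDerivAt_scaledKernel (hg' : ∀ t, HasDerivAt g (g' t) t)
    (hg'' : ∀ t, HasDerivAt g' (g'' t) t) {x : ℝ} (hx : 0 < x) :
    HasDerivAt (scaledKernel μ g g' c ε)
      (ε ^ 2 * g'' (ε * x) * x ^ μ + 2 * μ * ε * g' (ε * x) * x ^ (μ - 1)
        + μ * (μ - 1) * (g (ε * x) - c) * x ^ (μ - 2)) x := by
  have hlin : HasDerivAt (fun u : ℝ => ε * u) ε x := by
    simpa using (hasDerivAt_id x).const_mul ε
  have hpow : ∀ p : ℝ, HasDerivAt (fun u : ℝ => u ^ p) (p * x ^ (p - 1)) x := fun p =>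
    Real.hasDerivAt_rpow_const (Or.inl hx.ne')
  have hg'x : HasDerivAt (fun u => g' (ε * u)) (g'' (ε * x) * ε) x := (hg'' (ε * x)).comp x hlin
  have hgx : HasDerivAt (fun u => g (ε * u)) (g' (ε * x) * ε) x := (hg' (ε * x)).comp x hlin
  refine (((hg'x.const_mul ε).mul (hpow μ)).add
    (((hgx.sub_const c).const_mul μ).mul (hpow (μ - 1)))).congr_deriv ?_
  rw [show μ - 1 - 1 = μ - 2 by ring]
  ring

lemma abs_deriv_scaledKernel_le (hgb' : ∀ t, |g' t| ≤ Cg) (hgb'' : ∀ t, |g'' t| ≤ Cg)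
    (hμ : |μ| ≤ 1) (hε : ε ∈ Icc (0:ℝ) 1) {x : ℝ} (hx : x ∈ Ioc (0:ℝ) 1)
    (hA : |g (ε * x) - c| ≤ A) :
    |ε ^ 2 * g'' (ε * x) * x ^ μ + 2 * μ * ε * g' (ε * x) * x ^ (μ - 1)
        + μ * (μ - 1) * (g (ε * x) - c) * x ^ (μ - 2)| ≤ 3 * (ε * Cg + A) * x ^ (μ - 2) := by
  obtain ⟨hε0, hε1⟩ := hε
  have hx0 := hx.1
  have hCg : 0 ≤ Cg := (abs_nonneg _).trans (hgb' 0)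
  have hx2 : x ^ μ ≤ x ^ (μ - 2) := Real.rpow_le_rpow_of_exponent_ge hx0 hx.2 (by linarith)
  have hx1 : x ^ (μ - 1) ≤ x ^ (μ - 2) :=
    Real.rpow_le_rpow_of_exponent_ge hx0 hx.2 (by linarith)
  have hμ1 : |μ - 1| ≤ 2 := by linarith [abs_sub μ 1, abs_one (α := ℝ)]
  have hpos : ∀ p : ℝ, 0 ≤ x ^ p := fun p => Real.rpow_nonneg hx0.le p
  have t1 : |ε ^ 2 * g'' (ε * x) * x ^ μ| ≤ ε * Cg * x ^ (μ - 2) := by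
    rw [abs_mul, abs_mul, abs_of_nonneg (sq_nonneg ε), abs_of_nonneg (hpos μ)]
    exact mul_le_mul (mul_le_mul (by nlinarith) (hgb'' _) (abs_nonneg _) hε0) hx2 (hpos μ)
      (by positivity)
  have t2 : |2 * μ * ε * g' (ε * x) * x ^ (μ - 1)| ≤ 2 * ε * Cg * x ^ (μ - 2) := by
    rw [abs_mul, abs_mul, abs_mul, abs_mul, abs_two, abs_of_nonneg hε0, abs_of_nonneg (hpos _)]
    have : |μ| * ε * |g' (ε * x)| ≤ 1 * ε * Cg :=
      mul_le_mul (mul_le_mul_of_nonneg_right hμ hε0) (hgb' _) (abs_nonneg _) (by positivity)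
    nlinarith [mul_nonneg (mul_nonneg (abs_nonneg μ) hε0) (abs_nonneg (g' (ε * x))), hpos (μ - 1)]
  have t3 : |μ * (μ - 1) * (g (ε * x) - c) * x ^ (μ - 2)| ≤ 2 * A * x ^ (μ - 2) := by
    rw [abs_mul, abs_mul, abs_mul, abs_of_nonneg (hpos _)]
    gcongr
    nlinarith [abs_nonneg μ, abs_nonneg (μ - 1), abs_nonneg (g (ε * x) - c)]
  linarith [abs_add_three (ε ^ 2 * g'' (ε * x) * x ^ μ) (2 * μ * ε * g' (ε * x) * x ^ (μ - 1))
    (μ * (μ - 1) * (g (ε * x) - c) * x ^ (μ - 2)),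
    mul_nonneg ((abs_nonneg _).trans hA) (hpos (μ - 2))]

lemma abs_scaledKernel_sub_le (hg' : ∀ t, HasDerivAt g (g' t) t)
    (hg'' : ∀ t, HasDerivAt g' (g'' t) t) (hgb' : ∀ t, |g' t| ≤ Cg) (hgb'' : ∀ t, |g'' t| ≤ Cg)
    (hμ : |μ| ≤ 1) (hε : ε ∈ Icc (0:ℝ) 1) (hA : ∀ x ∈ Icc (0:ℝ) 1, |g (ε * x) - c| ≤ A)
    {x y : ℝ} (hy : 0 < y) (hyx : y ≤ x) (hx : x ≤ 1) :
    |scaledKernel μ g g' c ε x - scaledKernel μ g g' c ε y| ≤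
      3 * (ε * Cg + A) * (x - y) * y ^ (μ - 2) := by
  have hM : 0 ≤ 3 * (ε * Cg + A) := by
    have := (abs_nonneg _).trans (hgb' 0)
    have := (abs_nonneg _).trans (hA 0 (left_mem_Icc.2 zero_le_one))
    have := hε.1
    positivity
  have hmvt := (convex_Icc y x).norm_image_sub_le_of_norm_hasDerivWithin_le
    (fun ξ hξ => (hasDerivAt_scaledKernel (μ := μ) (c := c) (ε := ε) hg' hg''
      (hy.trans_le hξ.1)).hasDerivWithinAt)
    (fun ξ hξ => (abs_deriv_scaledKernel_le hgb' hgb'' hμ hε ⟨hy.trans_le hξ.1, hξ.2.trans hx⟩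
      (hA ξ ⟨(hy.trans_le hξ.1).le, hξ.2.trans hx⟩)).trans (mul_le_mul_of_nonneg_left
        (Real.rpow_le_rpow_of_nonpos hy hξ.1 (by linarith [abs_le.1 hμ])) hM))
    (left_mem_Icc.2 hyx) (right_mem_Icc.2 hyx)
  rw [Real.norm_eq_abs, Real.norm_eq_abs, abs_of_nonneg (sub_nonneg.2 hyx)] at hmvt
  linarith

lemma continuousOn_scaledKernel (hg' : ∀ t, HasDerivAt g (g' t) t)
    (hg'' : ∀ t, HasDerivAt g' (g'' t) t) : ContinuousOn (scaledKernel μ g g' c ε) (Ioi 0) :=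
  fun _ hx => (hasDerivAt_scaledKernel hg' hg'' hx).continuousAt.continuousWithinAt

lemma isSingularKernel_scaledKernel (hg' : ∀ t, HasDerivAt g (g' t) t)
    (hg'' : ∀ t, HasDerivAt g' (g'' t) t) (hgb' : ∀ t, |g' t| ≤ Cg) (hgb'' : ∀ t, |g'' t| ≤ Cg)
    (hμ : |μ| ≤ 1) (hε : ε ∈ Icc (0:ℝ) 1) (hA : ∀ x ∈ Icc (0:ℝ) 1, |g (ε * x) - c| ≤ A) :
    IsSingularKernel μ (3 * (ε * Cg + A)) (scaledKernel μ g g' c ε) where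
  abs_le x hx := by
    have hA0 := (abs_nonneg _).trans (hA 0 (left_mem_Icc.2 zero_le_one))
    have hCg := (abs_nonneg _).trans (hgb' 0)
    have := hε.1
    exact (abs_scaledKernel_le hgb' hμ hε.1 hA hx).trans
      (mul_le_mul_of_nonneg_right (by nlinarith) (Real.rpow_nonneg hx.1.le _))
  abs_sub_le _ _ hy hyx hx := abs_scaledKernel_sub_le hg' hg'' hgb' hgb'' hμ hε hA hy hyx hx
  continuousOn := (continuousOn_scaledKernel hg' hg'').mono Ioc_subset_Ioi_self

end ScaledKernel

structure IsBoundedC2 (C : ℝ) (g g' g'' : ℝ → ℝ) : Prop where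
  hasDerivAt : ∀ t, HasDerivAt g (g' t) t
  hasDerivAt_deriv : ∀ t, HasDerivAt g' (g'' t) t
  abs_le : ∀ t, |g t| ≤ C
  abs_deriv_le : ∀ t, |g' t| ≤ C
  abs_deriv2_le : ∀ t, |g'' t| ≤ C

section Identification

variable {μ ε : ℝ} {κ g g' f : ℝ → ℝ} {dκ : ℝ → ℝ → ℝ}

lemma hasDerivAt_comp_mul_of_eq_mul_rpow (hκ : ∀ t, κ t = g t * t ^ μ)
    (hg' : ∀ t, HasDerivAt g (g' t) t) (hε : 0 < ε) {x : ℝ} (hx : 0 < x) :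
    HasDerivAt (fun u => κ (ε * u)) (ε ^ μ * scaledKernel μ g g' 0 ε x) x := by
  have hlin : HasDerivAt (fun u : ℝ => ε * u) ε x := by
    simpa using (hasDerivAt_id x).const_mul ε
  have hprod := ((hg' (ε * x)).comp x hlin).mul
    ((Real.hasDerivAt_rpow_const (p := μ) (Or.inl (mul_pos hε hx).ne')).comp x hlin)
  rw [show (fun u => κ (ε * u)) = fun u => g (ε * u) * (ε * u) ^ μ from funext fun u => hκ _]
  refine hprod.congr_deriv ?_
  simp only [Function.comp_apply]
  rw [Real.mul_rpow hε.le hx.le, Real.mul_rpow hε.le hx.le, Real.rpow_sub_one hε.ne',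
    scaledKernel]
  field_simp
  ring

lemma Kop_eq_fracOp (hκ : ∀ t, κ t = g t * t ^ μ) (hg' : ∀ t, HasDerivAt g (g' t) t)
    (hdκ : ∀ x ∈ Ioc (0:ℝ) 1, HasDerivAt (fun u => κ (ε * u)) (dκ ε x) x) (hε : 0 < ε)
    {t : ℝ} (ht : t ∈ Icc (0:ℝ) 1) :
    Kop μ κ dκ ε f t = fracOp μ (fun r => g (ε * r)) (scaledKernel μ g g' 0 ε) f t := by
  have hint : ∫ u in (0:ℝ)..t, (f u - f t) * dκ ε (t - u) =
      ε ^ μ * ∫ u in (0:ℝ)..t, (f u - f t) * scaledKernel μ g g' 0 ε (t - u) := by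
    rw [← intervalIntegral.integral_const_mul]
    refine integral_congr_ae ?_
    filter_upwards [Measure.ae_ne volume t] with u hut hu
    rw [uIoc_of_le ht.1] at hu
    have hu' : t - u ∈ Ioc (0:ℝ) 1 :=
      ⟨by linarith [lt_of_le_of_ne hu.2 hut], by linarith [hu.1, ht.2]⟩
    rw [(hdκ _ hu').unique (hasDerivAt_comp_mul_of_eq_mul_rpow hκ hg' hε hu'.1)]
    ring
  have hεμ : ε ^ (-μ) * ε ^ μ = 1 := by
    rw [Real.rpow_neg hε.le, inv_mul_cancel₀ (Real.rpow_pos_of_pos hε μ).ne']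
  rw [Kop, fracOp, hint, hκ, Real.mul_rpow hε.le ht.1]
  linear_combination (g (ε * t) * t ^ μ * (f t - f 0) +
    ∫ u in (0:ℝ)..t, (f u - f t) * scaledKernel μ g g' 0 ε (t - u)) * hεμ

lemma K0op_eq_fracOp (t : ℝ) : K0op μ f t = fracOp μ 1 (fun x => μ * x ^ (μ - 1)) f t := by
  rw [K0op, fracOp, Pi.one_apply, one_mul, ← intervalIntegral.integral_const_mul]
  congr 1
  exact integral_congr fun u _ => by ring

lemma fracOp_sub {h₁ h₂ k₁ k₂ : ℝ → ℝ} {t : ℝ}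
    (hi₁ : IntervalIntegrable (fun u => (f u - f t) * k₁ (t - u)) volume 0 t)
    (hi₂ : IntervalIntegrable (fun u => (f u - f t) * k₂ (t - u)) volume 0 t) :
    fracOp μ h₁ k₁ f t - fracOp μ h₂ k₂ f t = fracOp μ (h₁ - h₂) (k₁ - k₂) f t := by
  have hsub : ∫ u in (0:ℝ)..t, (f u - f t) * (k₁ - k₂) (t - u) =
      (∫ u in (0:ℝ)..t, (f u - f t) * k₁ (t - u)) - ∫ u in (0:ℝ)..t, (f u - f t) * k₂ (t - u) := by
    rw [← integral_sub hi₁ hi₂]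
    exact integral_congr fun u _ => by simp only [Pi.sub_apply]; ring
  rw [fracOp, fracOp, fracOp, hsub, Pi.sub_apply]
  ring

end Identification

section ScaledOperator

variable {α γ μ Cg Cf ε : ℝ} {g g' g'' κ f : ℝ → ℝ} {dκ : ℝ → ℝ → ℝ}

lemma holderOnUnit_Kop (hγ : γ ∈ Ioo (0:ℝ) 1) (hμ : μ ∈ Ico (-1:ℝ) 0) (hμα : μ = γ - α)
    (hg : IsBoundedC2 Cg g g' g'') (hκ : ∀ t, κ t = g t * t ^ μ)
    (hdκ : ∀ x ∈ Ioc (0:ℝ) 1, HasDerivAt (fun u => κ (ε * u)) (dκ ε x) x)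
    (hε : ε ∈ Ioc (0:ℝ) 1) (hf : HolderOnUnit Cf α f) :
    HolderOnUnit (fracHolderConst γ μ * (3 * (ε * Cg + Cg)) * Cf) γ (Kop μ κ dκ ε f) := by
  have hA : ∀ x ∈ Icc (0:ℝ) 1, |g (ε * x) - 0| ≤ Cg := fun x _ => by
    simpa using hg.abs_le (ε * x)
  have hCg : 0 ≤ Cg := (abs_nonneg _).trans (hg.abs_le 0)
  have hweight := (isBoundedLipschitz_comp_mul_sub hg.hasDerivAt hg.abs_deriv_le hε.1.le
    hA).mono (M' := 3 * (ε * Cg + Cg)) (by nlinarith [hε.1])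
  simp only [sub_zero] at hweight
  have hkernel := isSingularKernel_scaledKernel hg.hasDerivAt hg.hasDerivAt_deriv
    hg.abs_deriv_le hg.abs_deriv2_le (abs_le.2 ⟨hμ.1, by linarith [hμ.2]⟩)
    ⟨hε.1.le, hε.2⟩ hA
  exact (holderOnUnit_fracOp hweight hkernel hf hγ hμ hμα).congr fun t ht =>
    (Kop_eq_fracOp hκ hg.hasDerivAt hdκ hε.1 ht).symm

lemma holderOnUnit_Kop_sub_K0op (hγ : γ ∈ Ioo (0:ℝ) 1) (hμ : μ ∈ Ico (-1:ℝ) 0)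
    (hμα : μ = γ - α) (hg : IsBoundedC2 Cg g g' g'') (hκ : ∀ t, κ t = g t * t ^ μ)
    (hdκ : ∀ x ∈ Ioc (0:ℝ) 1, HasDerivAt (fun u => κ (ε * u)) (dκ ε x) x)
    (hε : ε ∈ Ioc (0:ℝ) 1) {δ : ℝ} (hδ : ∀ x ∈ Icc (0:ℝ) 1, |g (ε * x) - 1| ≤ δ)
    (hf : HolderOnUnit Cf α f) :
    HolderOnUnit (fracHolderConst γ μ * (3 * (ε * Cg + δ)) * Cf) γ
      (fun t => Kop μ κ dκ ε f t - K0op μ f t) := by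
  have hμ' : |μ| ≤ 1 := abs_le.2 ⟨hμ.1, by linarith [hμ.2]⟩
  have hα : 0 < α := by linarith [hγ.1, hμ.2]
  have hweight := (isBoundedLipschitz_comp_mul_sub hg.hasDerivAt hg.abs_deriv_le hε.1.le
    hδ).mono (M' := 3 * (ε * Cg + δ)) (by
      nlinarith [hε.1, (abs_nonneg _).trans (hg.abs_le 0),
        (abs_nonneg _).trans (hδ 0 (left_mem_Icc.2 zero_le_one))])
  have hkernel := isSingularKernel_scaledKernel hg.hasDerivAt hg.hasDerivAt_deriv
    hg.abs_deriv_le hg.abs_deriv2_le hμ' ⟨hε.1.le, hε.2⟩ hδ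
  have hkernel₀ := isSingularKernel_scaledKernel (c := 0) hg.hasDerivAt hg.hasDerivAt_deriv
    hg.abs_deriv_le hg.abs_deriv2_le hμ' ⟨hε.1.le, hε.2⟩
    (fun x _ => by simpa using hg.abs_le (ε * x))
  refine (holderOnUnit_fracOp hweight hkernel hf hγ hμ hμα).congr fun t ht => ?_
  have hRL : ∀ x ∈ Ioc (0:ℝ) 1, |μ * x ^ (μ - 1)| ≤ 1 * x ^ (μ - 1) := fun x hx => by
    rw [abs_mul, abs_of_nonneg (Real.rpow_nonneg hx.1.le _)]
    exact mul_le_mul_of_nonneg_right hμ' (Real.rpow_nonneg hx.1.le _)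
  have hRLc : ContinuousOn (fun x : ℝ => μ * x ^ (μ - 1)) (Ioc 0 1) := fun x hx =>
    ((Real.continuousAt_rpow_const x _ (Or.inl hx.1.ne')).const_mul μ).continuousWithinAt
  rw [Kop_eq_fracOp hκ hg.hasDerivAt hdκ hε.1 ht, K0op_eq_fracOp,
    fracOp_sub (intervalIntegrable_holder_mul_kernel hf hkernel₀.abs_le hkernel₀.continuousOn hα
      hγ.1 (by linarith [hμ.2]) hμα ht.1 le_rfl ht.2)
    (intervalIntegrable_holder_mul_kernel hf hRL hRLc hα hγ.1 (by linarith [hμ.2]) hμα ht.1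
      le_rfl ht.2)]
  congr 1
  ext x
  simp only [scaledKernel, Pi.sub_apply]
  ring

end ScaledOperator

/-- Under the Hypothesis (`μ = γ - α < 0`, `g ∈ C_b²`,
`sup_{t∈[0,1]}|g(εt) - 1| → 0`), the family `{𝒦^ε}_{ε∈(0,1]}` is uniformly bounded
(equicontinuous) from `C^{α-Hld}([0,1])` to `C^{γ-Hld}([0,1])`, and for each
`f ∈ C^{α-Hld}`, `𝒦^ε f → 𝒦_0 f` in `C^{γ-Hld}` as `ε → 0` (both `𝒦^ε f` and
`𝒦_0 f` vanish at `0`, so `γ`-Hölder-seminorm convergence is norm convergence). -/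
theorem scaled_fractional_operator_equicontinuous_and_converges
    (α γ μ : ℝ) (hα : α ∈ Ioo (0:ℝ) 1) (hγ : γ ∈ Ioo (0:ℝ) 1)
    (hμdef : μ = γ - α) (hμ : μ < 0)
    (g g' g'' : ℝ → ℝ) (Cg : ℝ)
    (hg' : ∀ t, HasDerivAt g (g' t) t) (hg'' : ∀ t, HasDerivAt g' (g'' t) t)
    (hgb : ∀ t, |g t| ≤ Cg ∧ |g' t| ≤ Cg ∧ |g'' t| ≤ Cg)
    (hg1 : ∀ η > (0:ℝ), ∃ ε₀ > (0:ℝ), ∀ ε ∈ Ioo (0:ℝ) ε₀, ∀ t ∈ Icc (0:ℝ) 1,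
      |g (ε * t) - 1| ≤ η)
    (κ : ℝ → ℝ) (hκ : ∀ t, κ t = g t * t ^ μ)
    (dκ : ℝ → ℝ → ℝ)
    (hdκ : ∀ ε ∈ Ioc (0:ℝ) 1, ∀ t ∈ Ioc (0:ℝ) 1,
      HasDerivAt (fun u => κ (ε * u)) (dκ ε t) t) :
    (∃ C > (0:ℝ), ∀ ε ∈ Ioc (0:ℝ) 1, ∀ (f : ℝ → ℝ) (Cf : ℝ),
      (∀ s ∈ Icc (0:ℝ) 1, ∀ t ∈ Icc (0:ℝ) 1, |f t - f s| ≤ Cf * |t - s| ^ α) →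
      ∀ s ∈ Icc (0:ℝ) 1, ∀ t ∈ Icc (0:ℝ) 1,
        |Kop μ κ dκ ε f t - Kop μ κ dκ ε f s| ≤ C * Cf * |t - s| ^ γ) ∧
    (∀ (f : ℝ → ℝ) (Cf : ℝ),
      (∀ s ∈ Icc (0:ℝ) 1, ∀ t ∈ Icc (0:ℝ) 1, |f t - f s| ≤ Cf * |t - s| ^ α) →
      ∀ η > (0:ℝ), ∃ ε₀ > (0:ℝ), ∀ ε ∈ Ioc (0:ℝ) ε₀, ε ≤ 1 →
        ∀ s ∈ Icc (0:ℝ) 1, ∀ t ∈ Icc (0:ℝ) 1,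
          |(Kop μ κ dκ ε f t - K0op μ f t) - (Kop μ κ dκ ε f s - K0op μ f s)| ≤
            η * |t - s| ^ γ) := by
  have hg : IsBoundedC2 Cg g g' g'' :=
    ⟨hg', hg'', fun t => (hgb t).1, fun t => (hgb t).2.1, fun t => (hgb t).2.2⟩
  have hCg : 0 ≤ Cg := (abs_nonneg _).trans (hgb 0).1
  have hμ' : μ ∈ Ico (-1:ℝ) 0 := ⟨by linarith [hγ.1, hα.2], hμ⟩
  set C := fracHolderConst γ μ
  have hC : 0 < C := fracHolderConst_pos hγ hμ
  refine ⟨⟨C * (6 * Cg) + 1, by positivity, fun ε hε f Cf hf => ?_⟩, fun f Cf hf η hη => ?_⟩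
  · refine (holderOnUnit_Kop hγ hμ' hμdef hg hκ (hdκ ε hε) hε hf).mono
      (mul_le_mul_of_nonneg_right ?_ (HolderOnUnit.nonneg hf))
    nlinarith [hε.2, mul_nonneg hC.le hCg, mul_nonneg hC.le (mul_nonneg hε.1.le hCg)]
  · have hCf : 0 ≤ Cf := HolderOnUnit.nonneg hf
    -- Once `ε C_g ≤ δ`, the constant `3 C (ε C_g + δ) C_f` is at most `6 C δ (C_f + 1) = η`.
    set δ := η / (6 * C * (Cf + 1))
    have hδ : 0 < δ := by positivity
    have hδη : 6 * C * δ * (Cf + 1) = η := by unfold δ; field_simp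
    obtain ⟨ε₁, hε₁, hg1'⟩ := hg1 δ hδ
    refine ⟨min (ε₁ / 2) (δ / (Cg + 1)), by positivity, fun ε hε hε1 => ?_⟩
    have hεCg : ε * Cg ≤ δ := by
      have := (le_div_iff₀ (by positivity)).1 (hε.2.trans (min_le_right _ _))
      nlinarith [hε.1]
    refine (holderOnUnit_Kop_sub_K0op hγ hμ' hμdef hg hκ (hdκ ε ⟨hε.1, hε1⟩) ⟨hε.1, hε1⟩
      (hg1' ε ⟨hε.1, by linarith [hε.2.trans (min_le_left _ _)]⟩) hf).mono ?_
    nlinarith [mul_le_mul_of_nonneg_left hεCg (mul_nonneg hC.le hCf), mul_pos hC hδ]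
end
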